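/- arXiv:2508.15718 — 11 statements merged into one kernel-verified Lean document; each statement's English description precedes it below -/
import Mathlib

section
/- If i and j are strongly hollow elements of a multiplicative lattice Q, then i ∨ j is strongly hollow if and only if i ≤ j or j ≤ i. -/
/-- A multiplicative lattice: a complete lattice with a commutative, associative
multiplication distributing over arbitrary joins, with the top element as identity. -/
class MulLattice (Q : Type*) extends CompleteLattice Q, CommMonoid Q where
  mul_sSup : ∀ (a : Q) (s : Set Q), a * sSup s = ⨆ x ∈ s, a * x
  one_eq_top : (1 : Q) = ⊤

section OrderDefs
variable {Q : Type*} [CompleteLattice Q]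

/-- `a` is strongly hollow if `a ≤ j ⊔ k` implies `a ≤ j` or `a ≤ k`. -/
def StronglyHollow (a : Q) : Prop := ∀ j k : Q, a ≤ j ⊔ k → a ≤ j ∨ a ≤ k

/-- `a` is completely strongly hollow if whenever `a` is below an arbitrary join,
it is below one of the joinands. -/
def CompletelyStronglyHollow (a : Q) : Prop :=
  ∀ s : Set Q, a ≤ sSup s → ∃ x ∈ s, a ≤ x

/-- `κ(a)` is the join of all elements not above `a`. -/
def kappa (a : Q) : Q := sSup {k : Q | ¬ a ≤ k}

end OrderDefs

/-- The mlResidual `(a : b)`. -/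
def mlResidual {Q : Type*} [MulLattice Q] (a b : Q) : Q := sSup {x : Q | x * b ≤ a}

theorem stmt2 {Q : Type*} [MulLattice Q] (i j : Q)
    (hi : StronglyHollow i) (hj : StronglyHollow j) :
    StronglyHollow (i ⊔ j) ↔ (i ≤ j ∨ j ≤ i) := by
  constructor
  · intro h
    rcases h i j le_rfl with h' | h'
    · exact Or.inr (le_trans le_sup_right h')
    · exact Or.inl (le_trans le_sup_left h')
  · rintro (h | h) a b hab
    · rw [sup_eq_right.mpr h] at hab ⊢
      exact hj a b hab
    · rw [sup_eq_left.mpr h] at hab ⊢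
      exact hi a b hab
end

section
/- Let a be a nonzero strongly hollow element of a multiplicative lattice Q. Then either a ≤ J(Q) (the meet of all maximal elements), or there exists a unique maximal element of Q which is not greater than or equal to a. -/
theorem stmt3 {Q : Type*} [MulLattice Q] (a : Q) (ha : a ≠ ⊥)
    (hjoin : ∀ m n : Q, IsCoatom m → IsCoatom n → m ≠ n → m ⊔ n = ⊤)
    (hsh : StronglyHollow a) :
    a ≤ sInf {m : Q | IsCoatom m} ∨ (∃! m : Q, IsCoatom m ∧ ¬ a ≤ m) := by
  by_cases h : a ≤ sInf {m : Q | IsCoatom m}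
  · exact Or.inl h
  · right
    obtain ⟨m, hm, ham⟩ : ∃ m, IsCoatom m ∧ ¬ a ≤ m := by
      by_contra hc
      push_neg at hc
      exact h (le_sInf fun m hm => hc m hm)
    refine ⟨m, ⟨hm, ham⟩, ?_⟩
    rintro n ⟨hn, han⟩
    by_contra hne
    have := hjoin n m hn hm hne
    rcases hsh n m (this ▸ le_top) with h1 | h2
    · exact han h1
    · exact ham h2
end

section
/- If a multiplicative lattice Q has an element a that is both strongly hollow and a cancellation element (a·x = a·y implies x = y), then Q has at most one maximal element. -/
lemma MulLattice.mul_sup {Q : Type*} [MulLattice Q] (a x y : Q) :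
    a * (x ⊔ y) = a * x ⊔ a * y := by
  have h := MulLattice.mul_sSup a {x, y}
  rw [iSup_pair, sSup_pair] at h; exact h

lemma MulLattice.mul_le_left {Q : Type*} [MulLattice Q] (a x : Q) : a * x ≤ a := by
  have : a * x ≤ a * ⊤ := by
    have := MulLattice.mul_sup a x ⊤
    simp only [sup_top_eq] at this
    rw [this]; exact le_sup_left
  simpa [← MulLattice.one_eq_top] using this

theorem stmt4 {Q : Type*} [MulLattice Q]
    (h : ∃ a : Q, StronglyHollow a ∧ ∀ x y : Q, a * x = a * y → x = y) :
    ∀ m n : Q, IsCoatom m → IsCoatom n → m = n := by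
  obtain ⟨a, hsh, hcanc⟩ := h
  intro m n hm hn
  by_contra hne
  have hsup : m ⊔ n = ⊤ := by
    by_contra hne'
    have heq : m ⊔ n = m := by
      rcases lt_or_eq_of_le (le_sup_left : m ≤ m ⊔ n) with hlt | he
      · exact absurd (hm.2 _ hlt) hne'
      · exact he.symm
    have hnm : n ≤ m := by rw [← heq]; exact le_sup_right
    rcases hnm.lt_or_eq with hlt | he
    · exact hm.1 (hn.2 _ hlt)
    · exact hne he.symm
  have key : a = a * m ⊔ a * n := by
    have := MulLattice.mul_sup a m n
    rw [hsup, ← MulLattice.one_eq_top, mul_one] at this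
    exact this
  rcases hsh (a * m) (a * n) (key.le) with hle | hle
  · have : a * m = a * 1 := le_antisymm (by simpa using MulLattice.mul_le_left a m)
      (by simpa using hle)
    exact hm.1 (by rw [hcanc _ _ this, MulLattice.one_eq_top])
  · have : a * n = a * 1 := le_antisymm (by simpa using MulLattice.mul_le_left a n)
      (by simpa using hle)
    exact hn.1 (by rw [hcanc _ _ this, MulLattice.one_eq_top])
end

section
/- Let Q be a multiplicative lattice in which 1 is compact. Then 1 is completely strongly hollow if and only if Q is quasi-local (has a unique maximal element). -/
/-- The December 2024 Mathlib meaning of `CompleteLattice.IsCompactElement`. -/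
def CompleteLattice.IsCompactElement {α : Type*} [CompleteLattice α] (k : α) :=
  ∀ s : Set α, k ≤ sSup s → ∃ t : Finset α, ↑t ⊆ s ∧ k ≤ t.sup id

/-!
Maximal elements are exactly the coatoms. If two distinct coatoms exist, their join is `1`
although neither of them is `1`, so `1` is not even strongly hollow. Conversely, if `m` is the
only coatom, every element other than `1` lies below `m`; hence a join of elements all different
from `1` lies below `m` as well and cannot be `1`.
-/

section CompleteLattice

variable {α : Type*} [CompleteLattice α]

theorem CompletelyStronglyHollow.ne_bot {a : α} (h : CompletelyStronglyHollow a) : a ≠ ⊥ := by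
  intro ha
  obtain ⟨x, hx, -⟩ := h ∅ (by rw [sSup_empty, ha])
  exact hx

theorem CompletelyStronglyHollow.stronglyHollow {a : α} (h : CompletelyStronglyHollow a) :
    StronglyHollow a := by
  intro j k hjk
  obtain ⟨x, hx, hax⟩ := h {j, k} (by rwa [sSup_pair])
  rcases hx with rfl | rfl
  exacts [Or.inl hax, Or.inr hax]

theorem StronglyHollow.eq_of_isCoatom (h : StronglyHollow (⊤ : α))
    (hjoin : ∀ m n : α, IsCoatom m → IsCoatom n → m ≠ n → m ⊔ n = ⊤)
    {m n : α} (hm : IsCoatom m) (hn : IsCoatom n) : m = n := by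
  by_contra hne
  rcases h m n (hjoin m n hm hn hne).ge with hle | hle
  exacts [hm.1 (top_le_iff.mp hle), hn.1 (top_le_iff.mp hle)]

theorem CompletelyStronglyHollow.existsUnique_coatom [IsCoatomic α]
    (h : CompletelyStronglyHollow (⊤ : α))
    (hjoin : ∀ m n : α, IsCoatom m → IsCoatom n → m ≠ n → m ⊔ n = ⊤) :
    ∃! m : α, IsCoatom m := by
  have : Nontrivial α := ⟨⟨⊤, ⊥, h.ne_bot⟩⟩
  obtain ⟨m, hm⟩ := IsCoatomic.exists_coatom (α := α)
  exact ⟨m, hm, fun n hn => h.stronglyHollow.eq_of_isCoatom hjoin hn hm⟩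

theorem le_of_ne_top_of_existsUnique_coatom [IsCoatomic α] {m : α}
    (hm : ∀ n : α, IsCoatom n → n = m) {x : α} (hx : x ≠ ⊤) : x ≤ m := by
  obtain ⟨n, hn, hxn⟩ := (IsCoatomic.eq_top_or_exists_le_coatom x).resolve_left hx
  exact hm n hn ▸ hxn

theorem completelyStronglyHollow_top_of_existsUnique_coatom [IsCoatomic α]
    (h : ∃! m : α, IsCoatom m) : CompletelyStronglyHollow (⊤ : α) := by
  obtain ⟨m, hm, hunique⟩ := h
  intro s hs
  by_contra! hne
  have hsm : sSup s ≤ m := sSup_le fun x hx =>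
    le_of_ne_top_of_existsUnique_coatom hunique fun hxt => hne x hx hxt.ge
  exact hm.1 (top_le_iff.mp (hs.trans hsm))

end CompleteLattice

theorem stmt5_general {Q : Type*} [MulLattice Q]
    (hmax : ∀ x : Q, x ≠ ⊤ → ∃ m : Q, IsCoatom m ∧ x ≤ m)
    (hjoin : ∀ m n : Q, IsCoatom m → IsCoatom n → m ≠ n → m ⊔ n = ⊤) :
    CompletelyStronglyHollow (1 : Q) ↔ (∃! m : Q, IsCoatom m) := by
  have : IsCoatomic Q := ⟨fun x => or_iff_not_imp_left.2 (hmax x)⟩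
  rw [MulLattice.one_eq_top]
  exact ⟨fun h => h.existsUnique_coatom hjoin, completelyStronglyHollow_top_of_existsUnique_coatom⟩

theorem stmt5 {Q : Type*} [MulLattice Q]
    (hc : CompleteLattice.IsCompactElement (1 : Q))
    (hmax : ∀ x : Q, x ≠ ⊤ → ∃ m : Q, IsCoatom m ∧ x ≤ m)
    (hjoin : ∀ m n : Q, IsCoatom m → IsCoatom n → m ≠ n → m ⊔ n = ⊤) :
    CompletelyStronglyHollow (1 : Q) ↔ (∃! m : Q, IsCoatom m) :=
  stmt5_general hmax hjoin
end

section
/- Let a be a nonzero compact element of a multiplicative lattice Q. Then a is strongly hollow if and only if there exists a greatest element among elements of Q that are not ≥ a. When a is strongly hollow, this greatest element equals κ(a) := ⋁{ k ∈ Q | a ≰ k }. -/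
/-!
A nonzero element `a` that is strongly hollow is not below any finite join of elements not
above it; if `a` is moreover compact, the same holds for arbitrary joins, so
`κ(a) = ⋁ {k | a ≰ k}` is itself not above `a` and hence the greatest such element.
Conversely, if `g` is greatest with `a ≰ g`, then `a ≤ j ⊔ k` with `a ≰ j`, `a ≰ k` would
give `a ≤ j ⊔ k ≤ g`.
-/

section CompleteLattice

variable {Q : Type*} [CompleteLattice Q] {a : Q}

theorem StronglyHollow.exists_le_of_le_finset_sup (hsh : StronglyHollow a) (ha : a ≠ ⊥)
    {t : Finset Q} (hat : a ≤ t.sup id) : ∃ x ∈ t, a ≤ x := by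
  by_contra! hnot
  refine Finset.sup_induction (p := fun y => ¬ a ≤ y) (fun h => ha (le_bot_iff.1 h)) ?_ hnot hat
  intro j hj k hk hjk
  exact (hsh j k hjk).elim hj hk

theorem StronglyHollow.completelyStronglyHollow (hsh : StronglyHollow a) (ha : a ≠ ⊥)
    (hcomp : IsCompactElement a) : CompletelyStronglyHollow a := by
  intro s has
  obtain ⟨t, hts, hat⟩ :=
    (CompleteLattice.isCompactElement_iff_exists_le_sSup_of_le_sSup (k := a)).1 hcomp s has
  obtain ⟨x, hxt, hax⟩ := hsh.exists_le_of_le_finset_sup ha hat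
  exact ⟨x, hts hxt, hax⟩

theorem CompletelyStronglyHollow.isGreatest_kappa (hcsh : CompletelyStronglyHollow a) :
    IsGreatest {k : Q | ¬ a ≤ k} (kappa a) := by
  refine ⟨fun hak => ?_, fun k hk => le_sSup hk⟩
  obtain ⟨x, hx, hax⟩ := hcsh _ hak
  exact hx hax

theorem stronglyHollow_of_isGreatest {g : Q} (hg : IsGreatest {k : Q | ¬ a ≤ k} g) :
    StronglyHollow a := by
  intro j k hjk
  by_contra! hjk'
  exact hg.1 (hjk.trans (sup_le (hg.2 hjk'.1) (hg.2 hjk'.2)))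

end CompleteLattice

theorem stmt6 {Q : Type*} [MulLattice Q] (a : Q) (ha : a ≠ ⊥)
    (hcomp : IsCompactElement a) :
    (StronglyHollow a ↔ ∃ g : Q, IsGreatest {k : Q | ¬ a ≤ k} g) ∧
      (StronglyHollow a → IsGreatest {k : Q | ¬ a ≤ k} (kappa a)) := by
  have hkappa : StronglyHollow a → IsGreatest {k : Q | ¬ a ≤ k} (kappa a) := fun hsh =>
    (hsh.completelyStronglyHollow ha hcomp).isGreatest_kappa
  exact ⟨⟨fun hsh => ⟨kappa a, hkappa hsh⟩, fun ⟨_, hg⟩ => stronglyHollow_of_isGreatest hg⟩,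
    hkappa⟩
end

section
/- Let a be a strongly hollow element of a multiplicative lattice Q and i ∈ Q. Then a ∨ i is strongly hollow in the quotient lattice Q/i = [i,1] with multiplication x ∘ y = (x·y) ∨ i. -/
/-- In the quotient lattice Q/i = [i,1], joins agree with joins in Q, so strong
hollowness of a ⊔ i in Q/i is: for all r, s ≥ i, a ⊔ i ≤ r ⊔ s implies
a ⊔ i ≤ r or a ⊔ i ≤ s. -/
theorem stmt9 {Q : Type*} [MulLattice Q] (a i : Q) (hsh : StronglyHollow a) :
    ∀ r s : Q, i ≤ r → i ≤ s → a ⊔ i ≤ r ⊔ s → a ⊔ i ≤ r ∨ a ⊔ i ≤ s := by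
  intro r s hir his h
  rcases hsh r s (le_trans le_sup_left h) with ha | ha
  · exact Or.inl (sup_le ha hir)
  · exact Or.inr (sup_le ha his)
end

section
/- For any element x of a multiplicative lattice Q, there exists a maximal element of the set { k ≤ x | k is strongly hollow } with respect to the lattice order. -/
theorem stmt11 {Q : Type*} [MulLattice Q] (x : Q) :
    ∃ k : Q, (k ≤ x ∧ StronglyHollow k) ∧
      ∀ k' : Q, k' ≤ x → StronglyHollow k' → k ≤ k' → k' = k := by
  have key : ∀ c ⊆ {k : Q | k ≤ x ∧ StronglyHollow k}, IsChain (· ≤ ·) c →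
      ∃ ub ∈ {k : Q | k ≤ x ∧ StronglyHollow k}, ∀ z ∈ c, z ≤ ub := by
    intro c hc hchain
    rcases c.eq_empty_or_nonempty with rfl | hne
    · exact ⟨⊥, ⟨bot_le, fun j k _ => Or.inl bot_le⟩, by simp⟩
    refine ⟨sSup c, ⟨sSup_le fun a ha => (hc ha).1, ?_⟩, fun z hz => le_sSup hz⟩
    intro j k hjk
    by_cases hall : ∀ a ∈ c, a ≤ j
    · exact Or.inl (sSup_le hall)
    push_neg at hall
    obtain ⟨a0, ha0c, ha0j⟩ := hall
    have ha0k : a0 ≤ k := ((hc ha0c).2 j k (le_trans (le_sSup ha0c) hjk)).resolve_left ha0j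
    refine Or.inr (sSup_le fun a hac => ?_)
    rcases eq_or_ne a a0 with rfl | hne'
    · exact ha0k
    rcases hchain hac ha0c hne' with h | h
    · exact h.trans ha0k
    · rcases (hc hac).2 j k (le_trans (le_sSup hac) hjk) with hj | hk
      · exact absurd (h.trans hj) ha0j
      · exact hk
  obtain ⟨m, hm⟩ := zorn_le₀ {k : Q | k ≤ x ∧ StronglyHollow k} key
  exact ⟨m, hm.prop, fun k' h1 h2 hle => le_antisymm (hm.2 ⟨h1, h2⟩ hle) hle⟩
end

section
/- In a semi-simple multiplicative lattice Q (where the meet of all maximal elements equals 0), a nonzero element a is strongly hollow if and only if a is minimal (there is no element strictly between 0 and a). -/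
theorem stmt12 {Q : Type*} [MulLattice Q]
    (hss : sInf {m : Q | IsCoatom m} = ⊥)
    (hprime : ∀ m : Q, IsCoatom m → ∀ x y : Q, x * y ≤ m → x ≤ m ∨ y ≤ m)
    (hjoin : ∀ m n : Q, IsCoatom m → IsCoatom n → m ≠ n → m ⊔ n = ⊤)
    (a : Q) (ha : a ≠ ⊥) :
    StronglyHollow a ↔ (∀ x : Q, ⊥ < x → x ≤ a → x = a) := by
  have hmul_le : ∀ x y : Q, x * y ≤ x := by
    intro x y
    have h1 : x * sSup ({y, ⊤} : Set Q) = ⨆ z ∈ ({y, ⊤} : Set Q), x * z :=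
      MulLattice.mul_sSup x _
    have h2 : sSup ({y, ⊤} : Set Q) = ⊤ := by simp
    have h3 : x * ⊤ = x := by rw [← MulLattice.one_eq_top, mul_one]
    rw [h2, h3] at h1
    rw [show (⨆ z ∈ ({y, ⊤} : Set Q), x * z) = (x * y) ⊔ (x * ⊤) by
      rw [iSup_insert, iSup_singleton]] at h1
    calc x * y ≤ (x * y) ⊔ (x * ⊤) := le_sup_left
      _ = x := h1.symm
  have exCoatom : ∀ x : Q, x ≠ ⊥ → ∃ m : Q, IsCoatom m ∧ ¬ x ≤ m := by
    intro x hx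
    by_contra h
    push_neg at h
    have : x ≤ sInf {m : Q | IsCoatom m} := le_sInf fun m hm => h m hm
    rw [hss] at this
    exact hx (le_bot_iff.mp this)
  constructor
  · intro hsh x hx hxa
    obtain ⟨m, hm, hxm⟩ := exCoatom x hx.ne'
    have htop : x ⊔ m = ⊤ := hm.2 _ (right_lt_sup.mpr hxm)
    rcases hsh x m (by rw [htop]; exact le_top) with h | h
    · exact le_antisymm hxa h
    · exact absurd (hxa.trans h) hxm
  · intro hmin j k hjk
    by_contra hcon
    push_neg at hcon
    obtain ⟨h1, h2⟩ := hcon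
    have haj : a ⊓ j = ⊥ := by
      by_contra h
      have hlt : ⊥ < a ⊓ j := bot_lt_iff_ne_bot.mpr h
      have := hmin (a ⊓ j) hlt inf_le_left
      exact h1 (this ▸ inf_le_right)
    have hak : a ⊓ k = ⊥ := by
      by_contra h
      have hlt : ⊥ < a ⊓ k := bot_lt_iff_ne_bot.mpr h
      have := hmin (a ⊓ k) hlt inf_le_left
      exact h2 (this ▸ inf_le_right)
    obtain ⟨m, hm, ham⟩ := exCoatom a ha
    have hj : a * j ≤ m := by
      have : a * j ≤ a ⊓ j := le_inf (hmul_le a j) (by rw [mul_comm]; exact hmul_le j a)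
      rw [haj] at this
      exact this.trans bot_le
    have hk : a * k ≤ m := by
      have : a * k ≤ a ⊓ k := le_inf (hmul_le a k) (by rw [mul_comm]; exact hmul_le k a)
      rw [hak] at this
      exact this.trans bot_le
    have hjm : j ≤ m := (hprime m hm a j hj).resolve_left ham
    have hkm : k ≤ m := (hprime m hm a k hk).resolve_left ham
    exact ham (hjk.trans (sup_le hjm hkm))
end

section
/- Let Q = Q₁ × ⋯ × Qₙ be a finite direct product of multiplicative lattices. An element a ∈ Q is strongly hollow if and only if there exists an index i such that a has 0 in every coordinate except the i-th, and the i-th coordinate aᵢ is strongly hollow in Qᵢ. -/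
theorem stmt14 {n : ℕ} (hn : 0 < n) (Q : Fin n → Type*) [∀ i, MulLattice (Q i)]
    (a : ∀ i, Q i) :
    StronglyHollow a ↔
      ∃ i : Fin n, (∀ j : Fin n, j ≠ i → a j = ⊥) ∧ StronglyHollow (a i) := by

  classical
  constructor
  · intro h
    by_cases hall : ∀ j, a j = ⊥
    · exact ⟨⟨0, hn⟩, fun j _ => hall j, fun j k _ => Or.inl (by rw [hall]; exact bot_le)⟩
    · push_neg at hall
      obtain ⟨i, hi⟩ := hall
      have hzero : ∀ j : Fin n, j ≠ i → a j = ⊥ := by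
        intro j hj
        by_contra hjb
        have hle : a ≤ Function.update a i ⊥ ⊔ Function.update a j ⊥ := by
          intro m
          simp only [Pi.sup_apply]
          by_cases hm : m = i
          · subst hm
            rw [Function.update_self, Function.update_of_ne (fun h => hj h.symm)]
            exact le_sup_right
          · by_cases hm' : m = j
            · subst hm'
              rw [Function.update_self, Function.update_of_ne hm]
              exact le_sup_left
            · rw [Function.update_of_ne hm, Function.update_of_ne hm']
              exact le_sup_left
        rcases h _ _ hle with hc | hc
        · exact hi (le_bot_iff.mp (by simpa using hc i))
        · exact hjb (le_bot_iff.mp (by simpa using hc j))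
      refine ⟨i, hzero, ?_⟩
      intro j k hjk
      have hle : a ≤ Function.update (⊥ : ∀ m, Q m) i j ⊔ Function.update (⊥ : ∀ m, Q m) i k := by
        intro m
        simp only [Pi.sup_apply]
        by_cases hm : m = i
        · subst hm
          rw [Function.update_self, Function.update_self]
          exact hjk
        · rw [hzero m hm]
          exact bot_le
      rcases h _ _ hle with hc | hc
      · exact Or.inl (by simpa using hc i)
      · exact Or.inr (by simpa using hc i)
  · rintro ⟨i, hz, hsh⟩
    intro r s hrs
    rcases hsh (r i) (s i) (by simpa using hrs i) with hc | hc
    · refine Or.inl fun m => ?_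
      by_cases hm : m = i
      · subst hm; exact hc
      · rw [hz m hm]; exact bot_le
    · refine Or.inr fun m => ?_
      by_cases hm : m = i
      · subst hm; exact hc
      · rw [hz m hm]; exact bot_le
end

section
/- If x = ⋁_{ω∈Ω} a_ω and x = ⋁_{λ∈Λ} b_λ are two minimal representations of x ∈ Q as joins of completely strongly hollow elements, then for each ω ∈ Ω there exists a unique λ ∈ Λ with a_ω = b_λ, and vice versa. -/
theorem stmt15 {Q : Type*} [MulLattice Q] (x : Q) {Ω Λ : Type*}
    (a : Ω → Q) (b : Λ → Q)
    (ha : ∀ ω, CompletelyStronglyHollow (a ω)) (hb : ∀ l, CompletelyStronglyHollow (b l))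
    (hxa : x = ⨆ ω, a ω) (hxb : x = ⨆ l, b l)
    (hmina : ∀ ω : Ω, ¬ a ω ≤ ⨆ ω' ∈ {ω' : Ω | ω' ≠ ω}, a ω')
    (hminb : ∀ l : Λ, ¬ b l ≤ ⨆ l' ∈ {l' : Λ | l' ≠ l}, b l') :
    (∀ ω : Ω, ∃! l : Λ, a ω = b l) ∧ (∀ l : Λ, ∃! ω : Ω, b l = a ω) := by
  have key : ∀ ω : Ω, ∃ l, a ω = b l := by
    intro ω
    have h1 : a ω ≤ sSup (Set.range b) := by
      rw [sSup_range, ← hxb, hxa]; exact le_iSup a ω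
    obtain ⟨_, ⟨l, rfl⟩, hl⟩ := ha ω _ h1
    have h2 : b l ≤ sSup (Set.range a) := by
      rw [sSup_range, ← hxa, hxb]; exact le_iSup b l
    obtain ⟨_, ⟨ω', rfl⟩, hω'⟩ := hb l _ h2
    have hωω : ω' = ω := by
      by_contra hne
      apply hmina ω
      calc a ω ≤ a ω' := le_trans hl hω'
        _ ≤ ⨆ ω'' ∈ {ω'' : Ω | ω'' ≠ ω}, a ω'' := le_biSup _ hne
    exact ⟨l, le_antisymm hl (hωω ▸ hω')⟩
  have key' : ∀ l : Λ, ∃ ω, b l = a ω := by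
    intro l
    have h1 : b l ≤ sSup (Set.range a) := by
      rw [sSup_range, ← hxa, hxb]; exact le_iSup b l
    obtain ⟨_, ⟨ω, rfl⟩, hω⟩ := hb l _ h1
    have h2 : a ω ≤ sSup (Set.range b) := by
      rw [sSup_range, ← hxb, hxa]; exact le_iSup a ω
    obtain ⟨_, ⟨l', rfl⟩, hl'⟩ := ha ω _ h2
    have hll : l' = l := by
      by_contra hne
      apply hminb l
      calc b l ≤ b l' := le_trans hω hl'
        _ ≤ ⨆ l'' ∈ {l'' : Λ | l'' ≠ l}, b l'' := le_biSup _ hne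
    exact ⟨ω, le_antisymm hω (hll ▸ hl')⟩
  constructor
  · intro ω
    obtain ⟨l, hl⟩ := key ω
    refine ⟨l, hl, fun l' hl' => ?_⟩
    by_contra hne
    apply hminb l
    calc b l = b l' := by rw [← hl', hl]
      _ ≤ ⨆ l'' ∈ {l'' : Λ | l'' ≠ l}, b l'' := le_biSup _ hne
  · intro l
    obtain ⟨ω, hω⟩ := key' l
    refine ⟨ω, hω, fun ω' hω' => ?_⟩
    by_contra hne
    apply hmina ω
    calc a ω = a ω' := by rw [← hω', hω]
      _ ≤ ⨆ ω'' ∈ {ω'' : Ω | ω'' ≠ ω}, a ω'' := le_biSup _ hne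
end

section
/- Let (Q, m) be a quasi-local multiplicative lattice whose unique maximal element m is weak principal. Then m is strongly hollow. -/
/-- e is weak principal: weak meet principal and weak join principal. -/
def IsWeakPrincipal {Q : Type*} [MulLattice Q] (e : Q) : Prop :=
  (∀ a : Q, a ⊓ e = mlResidual a e * e) ∧ (∀ a : Q, a ⊔ mlResidual ⊥ e = mlResidual (a * e) e)


lemma mlResidual_mul_le {Q : Type*} [MulLattice Q] (a b : Q) : mlResidual a b * b ≤ a := by
  rw [mul_comm, mlResidual, MulLattice.mul_sSup]
  exact iSup₂_le fun x hx => by rw [mul_comm]; exact hx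

theorem stmt19 {Q : Type*} [MulLattice Q] (m : Q)
    (hm : IsCoatom m) (hloc : ∀ x : Q, x ≠ ⊤ → x ≤ m)
    (hwp : IsWeakPrincipal m) :
    StronglyHollow m := by
  intro j k hjk
  by_contra h
  push_neg at h
  obtain ⟨hj, hk⟩ := h
  have hjm : j ≤ m := hloc j (fun ht => hj (ht ▸ le_top))
  have hkm : k ≤ m := hloc k (fun ht => hk (ht ▸ le_top))
  have hmjk : m = j ⊔ k := le_antisymm hjk (sup_le hjm hkm)
  have hj' : mlResidual j m * m = j := by rw [← hwp.1 j]; exact inf_eq_left.2 hjm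
  have hk' : mlResidual k m * m = k := by rw [← hwp.1 k]; exact inf_eq_left.2 hkm
  set c := mlResidual j m ⊔ mlResidual k m with hc
  have hdist : c * m = mlResidual j m * m ⊔ mlResidual k m * m := by
    rw [mul_comm, hc, ← sSup_pair, MulLattice.mul_sSup, iSup_pair, mul_comm m, mul_comm m]
  have hm2 : m = c * m := by rw [hdist, hj', hk', ← hmjk]
  have htm : (⊤ : Q) * m = m := by rw [← MulLattice.one_eq_top, one_mul]
  have htop : mlResidual (c * m) m = ⊤ :=
    top_unique (le_sSup (show (⊤:Q) * m ≤ c * m by rw [htm, ← hm2]))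
  have heq : c ⊔ mlResidual ⊥ m = ⊤ := by rw [hwp.2 c, htop]
  have hcm : c ≤ m := by
    apply sup_le
    · refine hloc _ (fun ht => hj ?_)
      calc m = mlResidual j m * m := by rw [ht, htm]
        _ ≤ j := mlResidual_mul_le j m
    · refine hloc _ (fun ht => hk ?_)
      calc m = mlResidual k m * m := by rw [ht, htm]
        _ ≤ k := mlResidual_mul_le k m
  have hbm : mlResidual ⊥ m ≤ m := by
    refine hloc _ (fun ht => hj ?_)
    have : m ≤ ⊥ := by
      calc m = mlResidual ⊥ m * m := by rw [ht, htm]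
        _ ≤ ⊥ := mlResidual_mul_le ⊥ m
    exact le_trans this bot_le
  exact hm.1 (top_unique (heq ▸ sup_le hcm hbm))
end
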